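/- arXiv:1402.5012 — 3 statements merged into one kernel-verified Lean document; each statement's English description precedes it below -/
import Mathlib

section
/- Let K be an algebraically closed field of characteristic zero and n ≥ 1. If every injective Lie algebra endomorphism of VF(𝔸ⁿ) = Der_K(K[x₁,…,xₙ]) is bijective, then the Jacobian Conjecture holds in dimension n: every polynomial map φ = (f₁,…,fₙ) : 𝔸ⁿ → 𝔸ⁿ whose Jacobian determinant det(∂fᵢ/∂xⱼ) is a nonzero constant in K* is a polynomial automorphism; equivalently, every K-algebra endomorphism of K[x₁,…,xₙ] whose Jacobian determinant is a nonzero constant is a K-algebra automorphism. -/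
open MvPolynomial

/-- The Lie algebra `VF(𝔸ⁿ) = Der_K(K[x₁,…,xₙ])` of polynomial vector fields. -/
noncomputable abbrev VF (n : ℕ) (K : Type*) [Field K] :=
  Derivation K (MvPolynomial (Fin n) K) (MvPolynomial (Fin n) K)

/-!
If the Jacobian matrix `J` of `φ` is invertible over `K[x]`, every vector field `D` can be pulled
back along `φ`: `θ D := Σⱼ (J⁻¹ · (φ (D xᵢ))ᵢ)ⱼ ∂ⱼ` is the unique derivation with
`θ D ∘ φ = φ ∘ D`, and uniqueness makes `θ` a Lie algebra endomorphism of `VF(𝔸ⁿ)`.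

Both halves of bijectivity come from one fact: in characteristic zero a nonzero ideal of `K[x]`
stable under all `∂ᵢ` is the unit ideal (differentiate a nonzero element down to a nonzero
constant). By the chain rule `ker φ` is such an ideal, and it misses `1`, so `φ` is injective;
hence so is `θ`, which is then onto by hypothesis. Thus `im φ` is stable under every derivation,
so its conductor `{a | a K[x] ⊆ im φ}` is stable under the `∂ᵢ`. It contains the entries
`∂ⱼ φ(xᵢ)` of `J`, not all zero, so it is all of `K[x]` and `φ` is onto.
-/

namespace Subalgebra

variable {R S : Type*} [CommSemiring R] [CommSemiring S] [Algebra R S]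

def conductor (A : Subalgebra R S) : Ideal S where
  carrier := {a | ∀ b, a * b ∈ A}
  zero_mem' b := by simp only [zero_mul, zero_mem]
  add_mem' ha hb c := by simpa only [add_mul] using A.add_mem (ha c) (hb c)
  smul_mem' c a ha b := by simpa only [smul_eq_mul, mul_left_comm, mul_assoc] using ha (c * b)

theorem mem_of_mem_conductor {A : Subalgebra R S} {a : S} (ha : a ∈ A.conductor) : a ∈ A := by
  simpa using ha 1

theorem eq_top_of_conductor_eq_top {A : Subalgebra R S} (h : A.conductor = ⊤) : A = ⊤ :=
  eq_top_iff.mpr fun b _ => by simpa using (Ideal.eq_top_iff_one _).mp h b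

end Subalgebra

open Matrix

namespace MvPolynomial

variable {σ R : Type*}

theorem totalDegree_pderiv_lt [CommSemiring R] {i : σ} {p : MvPolynomial σ R}
    (h : pderiv i p ≠ 0) : (pderiv i p).totalDegree < p.totalDegree := by
  obtain ⟨m, hm, hdeg⟩ :=
    Finset.exists_mem_eq_sup _ (support_nonempty.mpr h) fun s => s.sum fun _ e => e
  have hp : m + Finsupp.single i 1 ∈ p.support := by
    rw [mem_support_iff, coeff_pderiv] at hm
    exact mem_support_iff.mpr (left_ne_zero_of_mul hm)
  have := le_totalDegree hp
  rw [Finsupp.sum_add_index' (fun _ => rfl) (fun _ _ _ => rfl),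
    Finsupp.sum_single_index rfl] at this
  rw [totalDegree, hdeg]
  omega

theorem eq_C_of_forall_pderiv_eq_zero [CommRing R] [IsDomain R] [CharZero R]
    {p : MvPolynomial σ R} (h : ∀ i, pderiv i p = 0) : p = C (coeff 0 p) := by
  classical
  ext m
  rw [coeff_C]
  split_ifs with hm
  · rw [hm]
  obtain ⟨i, hi⟩ : ∃ i, m i ≠ 0 := by
    by_contra! hm'
    exact hm (Finsupp.ext hm').symm
  have hcoeff := coeff_pderiv (i := i) p (m - Finsupp.single i 1)
  rw [h i, coeff_zero, tsub_add_cancel_of_le (Finsupp.single_le_iff.mpr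
    (Nat.one_le_iff_ne_zero.mpr hi))] at hcoeff
  exact (mul_eq_zero.mp hcoeff.symm).resolve_right (Nat.cast_add_one_ne_zero _)

theorem ideal_eq_top_of_pderiv_mem {K : Type*} [Field K] [CharZero K]
    {I : Ideal (MvPolynomial σ K)} (hI : ∀ i, ∀ p ∈ I, pderiv i p ∈ I) (h : I ≠ ⊥) : I = ⊤ := by
  obtain ⟨p, hpI, hp⟩ := Submodule.exists_mem_ne_zero_of_ne_bot h
  induction hd : p.totalDegree using Nat.strong_induction_on generalizing p with
  | _ d ih =>
    by_cases hconst : ∀ i, pderiv i p = 0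
    · have hC := eq_C_of_forall_pderiv_eq_zero hconst
      refine Ideal.eq_top_of_isUnit_mem _ hpI ?_
      rw [hC]
      exact (isUnit_iff_ne_zero.mpr fun h0 => hp (by rw [hC, h0, C_0])).map C
    · obtain ⟨i, hi⟩ := not_forall.mp hconst
      exact ih _ (hd ▸ totalDegree_pderiv_lt hi) _ (hI i p hpI) hi rfl

theorem derivation_aeval_eq_sum [CommSemiring R] [Fintype σ] {A M : Type*} [CommSemiring A]
    [Algebra R A] [AddCommMonoid M] [Module A M] [Module R M] [IsScalarTower R A M]
    (D : Derivation R A M) (f : σ → A) (p : MvPolynomial σ R) :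
    D (aeval f p) = ∑ i, aeval f (pderiv i p) • D (f i) := by
  classical
  induction p using MvPolynomial.induction_on with
  | C a => simp
  | add p q hp hq => simp [hp, hq, add_smul, Finset.sum_add_distrib]
  | mul_X p i hp =>
    simp [hp, pderiv_X, Pi.single_apply, add_smul, mul_smul, Finset.sum_add_distrib,
      Finset.smul_sum, apply_ite (aeval f), ite_smul]

theorem derivation_eq_sum_pderiv [CommSemiring R] [Fintype σ]
    (D : Derivation R (MvPolynomial σ R) (MvPolynomial σ R)) (p : MvPolynomial σ R) :
    D p = ∑ i, pderiv i p * D (X i) := by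
  simpa using derivation_aeval_eq_sum D X p

theorem derivation_algHom_eq_sum [CommSemiring R] [Fintype σ]
    (D : Derivation R (MvPolynomial σ R) (MvPolynomial σ R))
    (φ : MvPolynomial σ R →ₐ[R] MvPolynomial σ R) (p : MvPolynomial σ R) :
    D (φ p) = ∑ i, φ (pderiv i p) * D (φ (X i)) := by
  rw [aeval_unique φ]
  simpa using derivation_aeval_eq_sum D (φ ∘ X) p

section Jacobian

variable [Fintype σ] [CommSemiring R]

noncomputable def jacobian (φ : MvPolynomial σ R →ₐ[R] MvPolynomial σ R) :
    Matrix σ σ (MvPolynomial σ R) :=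
  Matrix.of fun i j => pderiv j (φ (X i))

theorem jacobian_mulVec (φ : MvPolynomial σ R →ₐ[R] MvPolynomial σ R)
    (E : Derivation R (MvPolynomial σ R) (MvPolynomial σ R)) :
    jacobian φ *ᵥ (fun j => E (X j)) = fun i => E (φ (X i)) := by
  funext i
  simp [jacobian, mulVec, dotProduct, ← derivation_eq_sum_pderiv]

theorem vecMul_jacobian (φ : MvPolynomial σ R →ₐ[R] MvPolynomial σ R) (p : MvPolynomial σ R) :
    (fun i => φ (pderiv i p)) ᵥ* jacobian φ = fun j => pderiv j (φ p) := by
  funext j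
  simp [jacobian, vecMul, dotProduct, derivation_algHom_eq_sum (pderiv j) φ p]

end Jacobian

section Pullback

variable {K : Type*} [Fintype σ] [DecidableEq σ] [Field K]
  {φ : MvPolynomial σ K →ₐ[K] MvPolynomial σ K}

theorem injective_of_isUnit_det_jacobian [CharZero K] (hJ : IsUnit (jacobian φ).det) :
    Function.Injective φ := by
  have hker : ∀ i, ∀ p ∈ RingHom.ker φ, pderiv i p ∈ RingHom.ker φ := by
    intro i p hp
    have hv : (fun i => φ (pderiv i p)) ᵥ* jacobian φ = 0 ᵥ* jacobian φ := by
      rw [vecMul_jacobian, RingHom.mem_ker.mp hp, zero_vecMul]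
      funext j
      exact (pderiv j).map_zero
    exact RingHom.mem_ker.mpr (congrFun (vecMul_injective_of_isUnit
      ((isUnit_iff_isUnit_det _).mpr hJ) hv) i)
  refine (RingHom.injective_iff_ker_eq_bot φ).mpr ?_
  by_contra hbot
  exact RingHom.ker_ne_top φ (ideal_eq_top_of_pderiv_mem hker hbot)

theorem derivation_ext_of_isUnit_det_jacobian (hJ : IsUnit (jacobian φ).det)
    {E₁ E₂ : Derivation K (MvPolynomial σ K) (MvPolynomial σ K)}
    (h : ∀ i, E₁ (φ (X i)) = E₂ (φ (X i))) : E₁ = E₂ := by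
  have hv : jacobian φ *ᵥ (fun j => E₁ (X j)) = jacobian φ *ᵥ (fun j => E₂ (X j)) := by
    simp only [jacobian_mulVec, h]
  exact derivation_ext fun j =>
    congrFun (mulVec_injective_of_isUnit ((isUnit_iff_isUnit_det _).mpr hJ) hv) j

variable (φ) in
noncomputable def pullback (D : Derivation K (MvPolynomial σ K) (MvPolynomial σ K)) :
    Derivation K (MvPolynomial σ K) (MvPolynomial σ K) :=
  mkDerivation K ((jacobian φ)⁻¹ *ᵥ fun i => φ (D (X i)))

theorem pullback_apply_algHom (hJ : IsUnit (jacobian φ).det)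
    (D : Derivation K (MvPolynomial σ K) (MvPolynomial σ K)) (p : MvPolynomial σ K) :
    pullback φ D (φ p) = φ (D p) := by
  have hX : ∀ i, pullback φ D (φ (X i)) = φ (D (X i)) := fun i => by
    rw [← congrFun (jacobian_mulVec φ (pullback φ D)) i]
    simp only [pullback, mkDerivation_X]
    rw [mulVec_mulVec, mul_nonsing_inv _ hJ, one_mulVec]
  rw [derivation_algHom_eq_sum, derivation_eq_sum_pderiv D p, map_sum]
  simp only [hX, map_mul]

theorem eq_pullback_of_apply_algHom (hJ : IsUnit (jacobian φ).det)
    {D E : Derivation K (MvPolynomial σ K) (MvPolynomial σ K)}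
    (h : ∀ p, E (φ p) = φ (D p)) : E = pullback φ D :=
  derivation_ext_of_isUnit_det_jacobian hJ fun i => by rw [h, pullback_apply_algHom hJ]

variable (φ) in
noncomputable def pullbackLieHom (hJ : IsUnit (jacobian φ).det) :
    Derivation K (MvPolynomial σ K) (MvPolynomial σ K) →ₗ⁅K⁆
      Derivation K (MvPolynomial σ K) (MvPolynomial σ K) where
  toFun := pullback φ
  map_add' D E := (eq_pullback_of_apply_algHom hJ fun p => by
    simp only [Derivation.add_apply, pullback_apply_algHom hJ, map_add]).symm
  map_smul' c D := (eq_pullback_of_apply_algHom hJ fun p => by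
    simp only [RingHom.id_apply, Derivation.smul_apply, pullback_apply_algHom hJ, map_smul]).symm
  map_lie' {D E} := (eq_pullback_of_apply_algHom hJ fun p => by
    simp only [Derivation.commutator_apply, pullback_apply_algHom hJ, map_sub]).symm

theorem pullbackLieHom_injective (hJ : IsUnit (jacobian φ).det) (hφ : Function.Injective φ) :
    Function.Injective (pullbackLieHom φ hJ) := fun D E h =>
  Derivation.ext fun p => hφ <| by
    rw [← pullback_apply_algHom hJ, ← pullback_apply_algHom hJ]
    exact congrArg (fun F : Derivation K _ _ => F (φ p)) h

theorem surjective_of_forall_derivation_mem_range [CharZero K] [Nonempty σ]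
    (hJ : IsUnit (jacobian φ).det)
    (h : ∀ (E : Derivation K (MvPolynomial σ K) (MvPolynomial σ K)) p, E (φ p) ∈ φ.range) :
    Function.Surjective φ := by
  have hpderiv : ∀ j, ∀ b ∈ φ.range, pderiv j b ∈ φ.range.conductor := by
    rintro j _ ⟨q, rfl⟩ g
    have hE := h (g • pderiv j) q
    rwa [Derivation.smul_apply, smul_eq_mul, mul_comm] at hE
  have hne : φ.range.conductor ≠ ⊥ := by
    obtain ⟨i, j, hij⟩ : ∃ i j, jacobian φ i j ≠ 0 := by
      by_contra! h0
      rw [show jacobian φ = 0 from Matrix.ext h0, det_zero] at hJ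
      exact not_isUnit_zero hJ
    exact fun hbot => hij <|
      (Submodule.eq_bot_iff _).mp hbot _ (hpderiv j _ (φ.mem_range_self (X i)))
  have htop := ideal_eq_top_of_pderiv_mem
    (fun j b hb => hpderiv j b (Subalgebra.mem_of_mem_conductor hb)) hne
  exact (AlgHom.range_eq_top φ).mp (Subalgebra.eq_top_of_conductor_eq_top htop)

end Pullback

end MvPolynomial

theorem kulikov_jacobian_general {K : Type*} [Field K] [CharZero K]
    {n : ℕ} (hn : 1 ≤ n)
    (H : ∀ θ : VF n K →ₗ⁅K⁆ VF n K, Function.Injective θ → Function.Bijective θ) :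
    ∀ φ : MvPolynomial (Fin n) K →ₐ[K] MvPolynomial (Fin n) K,
      (∃ c : K, c ≠ 0 ∧ (Matrix.of fun i j => pderiv j (φ (X i))).det = C c) →
      Function.Bijective φ := by
  rintro φ ⟨c, hc, hdet⟩
  have : Nonempty (Fin n) := ⟨⟨0, hn⟩⟩
  have hJ : IsUnit (jacobian φ).det := by
    rw [jacobian, hdet]
    exact hc.isUnit.map C
  have hφ := injective_of_isUnit_det_jacobian hJ
  obtain ⟨-, hθ⟩ := H (pullbackLieHom φ hJ) (pullbackLieHom_injective hJ hφ)
  refine ⟨hφ, surjective_of_forall_derivation_mem_range hJ fun E p => ?_⟩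
  obtain ⟨D, rfl⟩ := hθ E
  exact ⟨D p, (pullback_apply_algHom hJ D p).symm⟩

/-- **Kulikov.** If every injective Lie algebra endomorphism of `VF(𝔸ⁿ)` is
bijective, then the Jacobian Conjecture holds in dimension `n`: every `K`-algebra
endomorphism of `K[x₁,…,xₙ]` whose Jacobian determinant is a nonzero constant is an
automorphism. -/
theorem kulikov_jacobian {K : Type*} [Field K] [IsAlgClosed K] [CharZero K]
    {n : ℕ} (hn : 1 ≤ n)
    (H : ∀ θ : VF n K →ₗ⁅K⁆ VF n K, Function.Injective θ → Function.Bijective θ) :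
    ∀ φ : MvPolynomial (Fin n) K →ₐ[K] MvPolynomial (Fin n) K,
      (∃ c : K, c ≠ 0 ∧ (Matrix.of fun i j => pderiv j (φ (X i))).det = C c) →
      Function.Bijective φ :=
  kulikov_jacobian_general hn H
end

section
/- Let K be a field of characteristic zero and n ≥ 1. Then VF⁰(𝔸ⁿ) = [VF^c(𝔸ⁿ), VF^c(𝔸ⁿ)], i.e. the divergence-free vector fields form exactly the derived subalgebra of the Lie algebra of vector fields with constant divergence. -/
/-! The inclusion `[VF^c, VF^c] ⊆ VF⁰` is the identity `Div [u, v] = u (Div v) - v (Div u)`.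
Conversely, the homogeneous components of a divergence-free field are divergence-free. The Euler
field `E = Σ xᵢ ∂ᵢ` has constant divergence `n` and satisfies `[E, δ] = (d - 1) δ` when the
coefficients of `δ` are homogeneous of degree `d`, so in characteristic zero every component with
`d ≠ 1` is a bracket. The linear divergence-free fields form `𝔰𝔩ₙ`, which is spanned by
`[xⱼ∂ⱼ, xⱼ∂ᵢ] = xⱼ∂ᵢ` (`i ≠ j`) and `[xᵢ∂ₖ, xₖ∂ᵢ] = xᵢ∂ᵢ - xₖ∂ₖ`. -/

open MvPolynomial

/-- The divergence of a polynomial vector field `δ = Σᵢ fᵢ ∂/∂xᵢ` (with `fᵢ = δ(xᵢ)`),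
`Div δ = Σᵢ ∂fᵢ/∂xᵢ`. -/
noncomputable def divg {n : ℕ} {K : Type*} [Field K] (δ : VF n K) : MvPolynomial (Fin n) K :=
  ∑ i, pderiv i (δ (X i))

/-- `VF^c(𝔸ⁿ)`, the set of polynomial vector fields of constant divergence. -/
def VFc (n : ℕ) (K : Type*) [Field K] : Set (VF n K) :=
  {δ | ∃ c : K, divg δ = C c}

theorem Submodule.sum_smul_mem_of_sub_mem {R M ι : Type*} [Ring R] [AddCommGroup M] [Module R M]
    [Fintype ι] {p : Submodule R M} {c : ι → R} (hc : ∑ i, c i = 0) {v : ι → M}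
    (hv : ∀ i j, v i - v j ∈ p) : ∑ i, c i • v i ∈ p := by
  rcases isEmpty_or_nonempty ι with _ | ⟨⟨i₀⟩⟩
  · simp [Finset.univ_eq_empty, p.zero_mem]
  have : ∑ i, c i • v i = ∑ i, c i • (v i - v i₀) := by
    simp only [smul_sub, Finset.sum_sub_distrib, ← Finset.sum_smul, hc, zero_smul, sub_zero]
  rw [this]
  exact p.sum_mem fun i _ => p.smul_mem _ (hv i i₀)

theorem Derivation.finset_sum_apply {R A M ι : Type*} [CommSemiring R] [CommSemiring A]
    [Algebra R A] [AddCommMonoid M] [Module A M] [Module R M] (s : Finset ι)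
    (D : ι → Derivation R A M) (a : A) :
    (∑ i ∈ s, D i) a = ∑ i ∈ s, D i a := by
  rw [← Derivation.coeFnAddMonoidHom_apply, map_sum, Finset.sum_apply]
  rfl

namespace MvPolynomial

variable {σ R : Type*}

section CommSemiring

variable [CommSemiring R]

theorem derivation_eq_sum_smul_pderiv [Fintype σ]
    (D : Derivation R (MvPolynomial σ R) (MvPolynomial σ R)) :
    D = ∑ i, D (X i) • pderiv i := by
  classical
  refine derivation_ext fun j => ?_
  simp [Derivation.finset_sum_apply, Derivation.smul_apply, pderiv_X, Pi.single_apply]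

theorem derivation_apply_eq_sum [Fintype σ]
    (D : Derivation R (MvPolynomial σ R) (MvPolynomial σ R)) (φ : MvPolynomial σ R) :
    D φ = ∑ i, D (X i) * pderiv i φ := by
  conv_lhs => rw [derivation_eq_sum_smul_pderiv D]
  simp [Derivation.finset_sum_apply, Derivation.smul_apply]

theorem pderiv_homogeneousComponent_succ (i : σ) (d : ℕ) (φ : MvPolynomial σ R) :
    pderiv i (homogeneousComponent (d + 1) φ) = homogeneousComponent d (pderiv i φ) := by
  ext m
  simp only [coeff_pderiv, coeff_homogeneousComponent, map_add, Finsupp.degree_single,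
    Nat.add_right_cancel_iff, ite_mul, zero_mul]

theorem pderiv_eq_C_of_isHomogeneous_one {φ : MvPolynomial σ R} (h : φ.IsHomogeneous 1) (j : σ) :
    pderiv j φ = C (coeff 0 (pderiv j φ)) :=
  totalDegree_eq_zero_iff_eq_C.mp ((totalDegree_zero_iff_isHomogeneous σ).mpr h.pderiv)

theorem eq_sum_smul_X_smul_pderiv_of_isHomogeneous_one [Fintype σ]
    {D : Derivation R (MvPolynomial σ R) (MvPolynomial σ R)}
    (hD : ∀ i, (D (X i)).IsHomogeneous 1) :
    D = ∑ i, ∑ j, coeff 0 (pderiv j (D (X i))) • ((X j : MvPolynomial σ R) • pderiv i) := by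
  classical
  refine derivation_ext fun k => ?_
  simp only [Derivation.finset_sum_apply, Derivation.smul_apply, pderiv_X, Pi.single_apply,
    smul_eq_mul, mul_ite, mul_one, mul_zero, smul_ite, smul_zero, Finset.sum_ite_irrel,
    Finset.sum_const_zero, Finset.sum_ite_eq, Finset.mem_univ, ↓reduceIte]
  calc D (X k) = ∑ j, X j * pderiv j (D (X k)) := by rw [(hD k).sum_X_mul_pderiv, one_smul]
    _ = _ := Finset.sum_congr rfl fun j _ => by
      rw [← C_mul', ← pderiv_eq_C_of_isHomogeneous_one (hD k) j, mul_comm]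

noncomputable def derivationHomogeneousComponent (d : ℕ)
    (D : Derivation R (MvPolynomial σ R) (MvPolynomial σ R)) :
    Derivation R (MvPolynomial σ R) (MvPolynomial σ R) :=
  mkDerivation R fun i => homogeneousComponent d (D (X i))

@[simp]
theorem derivationHomogeneousComponent_X (d : ℕ)
    (D : Derivation R (MvPolynomial σ R) (MvPolynomial σ R)) (i : σ) :
    derivationHomogeneousComponent d D (X i) = homogeneousComponent d (D (X i)) :=
  mkDerivation_X _ _ _

theorem sum_derivationHomogeneousComponent
    {D : Derivation R (MvPolynomial σ R) (MvPolynomial σ R)} {N : ℕ}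
    (hN : ∀ i, (D (X i)).totalDegree ≤ N) :
    ∑ d ∈ Finset.range (N + 1), derivationHomogeneousComponent d D = D := by
  refine derivation_ext fun i => ?_
  rw [Derivation.finset_sum_apply]
  simp only [derivationHomogeneousComponent_X]
  conv_rhs => rw [← sum_homogeneousComponent (D (X i))]
  refine (Finset.sum_subset (Finset.range_subset_range.mpr (by grind [hN i]))
    fun d _ hd => homogeneousComponent_eq_zero _ _ (by grind)).symm

variable (σ R) in
noncomputable def eulerDerivation : Derivation R (MvPolynomial σ R) (MvPolynomial σ R) :=
  mkDerivation R X

@[simp]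
theorem eulerDerivation_X (i : σ) : eulerDerivation σ R (X i) = X i :=
  mkDerivation_X _ _ _

theorem eulerDerivation_apply_of_isHomogeneous [Fintype σ] {φ : MvPolynomial σ R} {n : ℕ}
    (h : φ.IsHomogeneous n) : eulerDerivation σ R φ = n • φ := by
  rw [derivation_apply_eq_sum, ← h.sum_X_mul_pderiv]
  simp only [eulerDerivation_X]

end CommSemiring

section CommRing

variable [CommRing R]

theorem pderiv_derivation_apply [Fintype σ] (i : σ)
    (D : Derivation R (MvPolynomial σ R) (MvPolynomial σ R)) (φ : MvPolynomial σ R) :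
    pderiv i (D φ) = D (pderiv i φ) + ∑ j, pderiv i (D (X j)) * pderiv j φ := by
  have h := derivation_apply_eq_sum ⁅pderiv (R := R) i, D⁆ φ
  have hD : ∀ j, D (pderiv i (X j)) = 0 := fun j => by
    rcases eq_or_ne j i with rfl | hji
    · simp [pderiv_X_self]
    · simp [pderiv_X_of_ne hji]
  simp only [Derivation.commutator_apply, hD, sub_zero] at h
  linear_combination h

theorem lie_X_smul_pderiv [DecidableEq σ] (a b c d : σ) :
    ⁅(X a : MvPolynomial σ R) • pderiv (R := R) b, (X c : MvPolynomial σ R) • pderiv d⁆ =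
      (if b = c then (X a : MvPolynomial σ R) • pderiv (R := R) d else 0) -
        (if d = a then (X c : MvPolynomial σ R) • pderiv (R := R) b else 0) := by
  refine derivation_ext fun k => ?_
  simp only [Derivation.commutator_apply, Derivation.smul_apply, pderiv_X, Pi.single_apply,
    smul_eq_mul, mul_ite, mul_one, mul_zero, Derivation.coe_sub, Pi.sub_apply]
  split_ifs <;> simp_all

theorem lie_eulerDerivation_of_isHomogeneous [Fintype σ]
    {D : Derivation R (MvPolynomial σ R) (MvPolynomial σ R)} {d : ℕ}
    (hD : ∀ i, (D (X i)).IsHomogeneous d) : ⁅eulerDerivation σ R, D⁆ = ((d : R) - 1) • D := by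
  refine derivation_ext fun i => ?_
  rw [Derivation.commutator_apply, Derivation.smul_apply, eulerDerivation_X,
    eulerDerivation_apply_of_isHomogeneous (hD i), sub_smul, one_smul, Nat.cast_smul_eq_nsmul]

end CommRing

end MvPolynomial

section VectorFields

variable {K : Type*} [Field K] {n : ℕ}

theorem divg_zero : divg (0 : VF n K) = 0 := by
  simp [divg]

theorem divg_add (u v : VF n K) : divg (u + v) = divg u + divg v := by
  simp [divg, Finset.sum_add_distrib]

theorem divg_smul (c : K) (u : VF n K) : divg (c • u) = c • divg u := by
  simp [divg, Derivation.smul_apply, Finset.smul_sum]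

theorem divg_lie (u v : VF n K) : divg ⁅u, v⁆ = u (divg v) - v (divg u) := by
  have expand : ∀ w z : VF n K, ∑ i, pderiv i (w (z (X i))) =
      w (divg z) + ∑ i, ∑ j, pderiv i (w (X j)) * pderiv j (z (X i)) := fun w z => by
    rw [Finset.sum_congr rfl fun i _ => pderiv_derivation_apply i w (z (X i)),
      Finset.sum_add_distrib, divg, map_sum]
  have symm : ∑ i, ∑ j, pderiv i (u (X j)) * pderiv j (v (X i)) =
      ∑ i, ∑ j, pderiv i (v (X j)) * pderiv j (u (X i)) := by
    rw [Finset.sum_comm]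
    simp only [mul_comm]
  calc divg ⁅u, v⁆ = ∑ i, pderiv i (u (v (X i))) - ∑ i, pderiv i (v (u (X i))) := by
        simp [divg, Derivation.commutator_apply, Finset.sum_sub_distrib]
    _ = u (divg v) - v (divg u) := by
        rw [expand, expand, symm]
        ring

theorem divg_lie_eq_zero {u v : VF n K} (hu : u ∈ VFc n K) (hv : v ∈ VFc n K) :
    divg ⁅u, v⁆ = 0 := by
  obtain ⟨a, ha⟩ := hu
  obtain ⟨b, hb⟩ := hv
  rw [divg_lie, ha, hb, derivation_C, derivation_C, sub_zero]

theorem divg_smul_pderiv (f : MvPolynomial (Fin n) K) (i : Fin n) :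
    divg (f • pderiv i) = pderiv i f := by
  classical
  simp [divg, Derivation.smul_apply, pderiv_X, Pi.single_apply, apply_ite (pderiv _)]

theorem X_smul_pderiv_mem_VFc (i j : Fin n) :
    (X j : MvPolynomial (Fin n) K) • pderiv i ∈ VFc n K := by
  rcases eq_or_ne j i with rfl | hji
  · exact ⟨1, by rw [divg_smul_pderiv, pderiv_X_self, map_one]⟩
  · exact ⟨0, by rw [divg_smul_pderiv, pderiv_X_of_ne hji, map_zero]⟩

theorem eulerDerivation_mem_VFc : eulerDerivation (Fin n) K ∈ VFc n K :=
  ⟨n, by simp [divg]⟩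

theorem divg_derivationHomogeneousComponent_eq_zero {δ : VF n K} (h : divg δ = 0) (d : ℕ) :
    divg (derivationHomogeneousComponent d δ) = 0 := by
  cases d with
  | zero => simp [divg]
  | succ d =>
    simp only [divg] at h ⊢
    simp [pderiv_homogeneousComponent_succ, ← map_sum, h]

noncomputable def derivedVFc (n : ℕ) (K : Type*) [Field K] : Submodule K (VF n K) :=
  Submodule.span K {x | ∃ u ∈ VFc n K, ∃ v ∈ VFc n K, x = ⁅u, v⁆}

theorem lie_mem_derivedVFc {u v : VF n K} (hu : u ∈ VFc n K) (hv : v ∈ VFc n K) :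
    ⁅u, v⁆ ∈ derivedVFc n K :=
  Submodule.subset_span ⟨u, hu, v, hv, rfl⟩

theorem divg_eq_zero_of_mem_derivedVFc {δ : VF n K} (h : δ ∈ derivedVFc n K) : divg δ = 0 := by
  induction h using Submodule.span_induction with
  | mem x hx =>
    obtain ⟨u, hu, v, hv, rfl⟩ := hx
    exact divg_lie_eq_zero hu hv
  | zero => exact divg_zero
  | add x y _ _ hx hy => rw [divg_add, hx, hy, add_zero]
  | smul a x _ hx => rw [divg_smul, hx, smul_zero]

theorem mem_derivedVFc_of_isHomogeneous_one {δ : VF n K} (hδ : ∀ i, (δ (X i)).IsHomogeneous 1)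
    (h0 : divg δ = 0) : δ ∈ derivedVFc n K := by
  classical
  set B : Fin n → Fin n → VF n K := fun i j => (X j : MvPolynomial (Fin n) K) • pderiv i
  set c : Fin n → Fin n → K := fun i j => coeff 0 (pderiv j (δ (X i)))
  have trace : ∑ i, c i i = 0 := by
    apply C_injective (Fin n) K
    rw [map_sum, map_zero, ← h0, divg]
    exact Finset.sum_congr rfl fun i _ => (pderiv_eq_C_of_isHomogeneous_one (hδ i) i).symm
  have offdiag : ∀ i j, i ≠ j → B i j ∈ derivedVFc n K := fun i j hij => by
    have h := lie_X_smul_pderiv (R := K) j j j i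
    simp only [if_true, if_neg hij, sub_zero] at h
    rw [show B i j = _ from h.symm]
    exact lie_mem_derivedVFc (X_smul_pderiv_mem_VFc j j) (X_smul_pderiv_mem_VFc i j)
  have diag : ∀ i k, B i i - B k k ∈ derivedVFc n K := fun i k => by
    have h := lie_X_smul_pderiv (R := K) i k k i
    simp only [if_true] at h
    rw [show B i i - B k k = _ from h.symm]
    exact lie_mem_derivedVFc (X_smul_pderiv_mem_VFc k i) (X_smul_pderiv_mem_VFc i k)
  have split : ∑ i, ∑ j, c i j • B i j =
      ∑ i, c i i • B i i + ∑ i, ∑ j ∈ Finset.univ.erase i, c i j • B i j := by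
    rw [← Finset.sum_add_distrib]
    exact Finset.sum_congr rfl fun i _ => (Finset.add_sum_erase _ _ (Finset.mem_univ i)).symm
  rw [eq_sum_smul_X_smul_pderiv_of_isHomogeneous_one hδ, split]
  exact add_mem (Submodule.sum_smul_mem_of_sub_mem trace diag) <|
    Submodule.sum_mem _ fun i _ => Submodule.sum_mem _ fun j hj =>
      Submodule.smul_mem _ _ (offdiag i j (Finset.ne_of_mem_erase hj).symm)

theorem mem_derivedVFc_of_isHomogeneous_of_ne_one [CharZero K] {δ : VF n K} {d : ℕ} (hd : d ≠ 1)
    (hδ : ∀ i, (δ (X i)).IsHomogeneous d) (h0 : divg δ = 0) : δ ∈ derivedVFc n K := by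
  have hd' : (d : K) - 1 ≠ 0 := sub_ne_zero.mpr (by exact_mod_cast hd)
  have : δ = ((d : K) - 1)⁻¹ • ⁅eulerDerivation (Fin n) K, δ⁆ := by
    rw [lie_eulerDerivation_of_isHomogeneous hδ, smul_smul, inv_mul_cancel₀ hd', one_smul]
  rw [this]
  exact Submodule.smul_mem _ _
    (lie_mem_derivedVFc eulerDerivation_mem_VFc ⟨0, by rw [h0, map_zero]⟩)

theorem mem_derivedVFc_of_divg_eq_zero [CharZero K] {δ : VF n K} (h0 : divg δ = 0) :
    δ ∈ derivedVFc n K := by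
  obtain ⟨N, hN⟩ : ∃ N, ∀ i, (δ (X i)).totalDegree ≤ N :=
    ⟨_, fun i => Finset.le_sup (f := fun i => (δ (X i)).totalDegree) (Finset.mem_univ i)⟩
  rw [← sum_derivationHomogeneousComponent hN]
  refine Submodule.sum_mem _ fun d _ => ?_
  have hhom : ∀ i, (derivationHomogeneousComponent d δ (X i)).IsHomogeneous d := fun i => by
    rw [derivationHomogeneousComponent_X]
    exact homogeneousComponent_isHomogeneous d _
  have h0d := divg_derivationHomogeneousComponent_eq_zero h0 d
  rcases eq_or_ne d 1 with rfl | hd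
  · exact mem_derivedVFc_of_isHomogeneous_one hhom h0d
  · exact mem_derivedVFc_of_isHomogeneous_of_ne_one hd hhom h0d

end VectorFields

theorem VF0_eq_derived_VFc_general {K : Type*} [Field K] [CharZero K] {n : ℕ} :
    {δ : VF n K | divg δ = 0} =
      (Submodule.span K {x : VF n K | ∃ u ∈ VFc n K, ∃ v ∈ VFc n K, x = ⁅u, v⁆} :
        Set (VF n K)) := by
  ext δ
  exact ⟨mem_derivedVFc_of_divg_eq_zero, divg_eq_zero_of_mem_derivedVFc⟩

/-- `VF⁰(𝔸ⁿ) = [VF^c(𝔸ⁿ), VF^c(𝔸ⁿ)]`: the divergence-free vector fields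
are exactly the derived subalgebra (the `K`-span of all brackets) of the Lie algebra of
vector fields with constant divergence. -/
theorem VF0_eq_derived_VFc {K : Type*} [Field K] [CharZero K] {n : ℕ} (hn : 1 ≤ n) :
    {δ : VF n K | divg δ = 0} =
      (Submodule.span K {x : VF n K | ∃ u ∈ VFc n K, ∃ v ∈ VFc n K, x = ⁅u, v⁆} :
        Set (VF n K)) :=
  VF0_eq_derived_VFc_general
end

section
/- Let K be a field of characteristic zero and n ≥ 1. If δ, μ ∈ VF(𝔸ⁿ) are commuting vector fields ([δ,μ] = 0), then for every polynomial f ∈ K[x₁,…,xₙ] one has [δ, f·μ] = δ(f)·μ. Consequently, if the adjoint operator ad(δ) : VF(𝔸ⁿ) → VF(𝔸ⁿ), ν ↦ [δ,ν], is locally nilpotent, then δ is a locally nilpotent derivation of K[x₁,…,xₙ]. -/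
open MvPolynomial

namespace Derivation

variable {R A : Type*} [CommRing R] [CommRing A] [Algebra R A]

theorem lie_smul (D₁ D₂ : Derivation R A A) (a : A) :
    ⁅D₁, a • D₂⁆ = D₁ a • D₂ + a • ⁅D₁, D₂⁆ := by
  ext b
  simp only [commutator_apply, add_apply, smul_apply, leibniz, smul_eq_mul]
  ring

theorem lie_smul_of_lie_eq_zero {D₁ D₂ : Derivation R A A} (h : ⁅D₁, D₂⁆ = 0) (a : A) :
    ⁅D₁, a • D₂⁆ = D₁ a • D₂ := by
  rw [lie_smul, h, smul_zero, add_zero]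

theorem iterate_lie_smul_self (D : Derivation R A A) (a : A) (m : ℕ) :
    (fun E : Derivation R A A => ⁅D, E⁆)^[m] (a • D) = (D^[m] a) • D := by
  induction m with
  | zero => rfl
  | succ m ih =>
    rw [Function.iterate_succ_apply', Function.iterate_succ_apply', ih,
      lie_smul_of_lie_eq_zero (lie_self D)]

theorem apply_eq_zero_of_smul_eq_zero [IsDomain A] {D : Derivation R A A} {a : A}
    (h : a • D = 0) : D a = 0 := by
  have hmul : a * D a = 0 := by simpa using congrArg (fun E : Derivation R A A => E a) h
  rcases mul_eq_zero.mp hmul with ha | hDa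
  · rw [ha, map_zero]
  · exact hDa

end Derivation

theorem bracket_smul_of_commute_general {K : Type*} [Field K] {n : ℕ}
    (δ μ : VF n K) (h : ⁅δ, μ⁆ = 0) :
    (∀ f : MvPolynomial (Fin n) K, ⁅δ, f • μ⁆ = δ f • μ) ∧
    ((∀ ν : VF n K, ∃ m : ℕ, (fun ρ : VF n K => ⁅δ, ρ⁆)^[m] ν = 0) →
      ∀ f : MvPolynomial (Fin n) K, ∃ m : ℕ,
        (fun g : MvPolynomial (Fin n) K => δ g)^[m] f = 0) := by
  refine ⟨Derivation.lie_smul_of_lie_eq_zero h, fun hnil f => ?_⟩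
  -- `ad δ` kills some `(δ^[m] f) • δ`; evaluating it at `δ^[m] f` gives `δ^[m+1] f = 0`.
  obtain ⟨m, hm⟩ := hnil (f • δ)
  rw [Derivation.iterate_lie_smul_self] at hm
  exact ⟨m + 1, by
    rw [Function.iterate_succ_apply']
    exact Derivation.apply_eq_zero_of_smul_eq_zero hm⟩

/-- If `δ` and `μ` are commuting vector fields then `⁅δ, f·μ⁆ = δ(f)·μ`
for every polynomial `f`. Consequently, if the adjoint operator `ad(δ) = ⁅δ,·⁆` is locally
nilpotent on `VF(𝔸ⁿ)`, then `δ` is a locally nilpotent derivation of `K[x₁,…,xₙ]`. -/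
theorem bracket_smul_of_commute {K : Type*} [Field K] [CharZero K] {n : ℕ} (hn : 1 ≤ n)
    (δ μ : VF n K) (h : ⁅δ, μ⁆ = 0) :
    (∀ f : MvPolynomial (Fin n) K, ⁅δ, f • μ⁆ = δ f • μ) ∧
    ((∀ ν : VF n K, ∃ m : ℕ, (fun ρ : VF n K => ⁅δ, ρ⁆)^[m] ν = 0) →
      ∀ f : MvPolynomial (Fin n) K, ∃ m : ℕ,
        (fun g : MvPolynomial (Fin n) K => δ g)^[m] f = 0) :=
  bracket_smul_of_commute_general δ μ h
end
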